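/- Let P be a poset and 𝓜, 𝓝 minimal subset selections on P. If the 𝓜𝓝-convergence structure in P is topological (every net converging to x in the topology τ_𝓜𝓝 also 𝓜𝓝-converges to x), then P is 𝓜𝓝-continuous. -/

import Mathlib

universe u

/-- A directed preordered index for a net. -/
structure IsDirNet {I : Type u} (r : I → I → Prop) : Prop where
  refl : ∀ i, r i i
  trans : ∀ {i j k : I}, r i j → r j k → r i k
  nonempty : Nonempty I
  directed : ∀ i j, ∃ k, r i k ∧ r j k

/-- A minimal subset selection on a poset `P`. -/
def MinSel {P : Type u} [PartialOrder P] (M : Set (Set P)) : Prop :=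
  (∅ : Set P) ∉ M ∧ ∀ x : P, {x} ∈ M

/-- The net `f : I → P` `𝓜𝓝`-converges to `x`. -/
def MNConv {P : Type u} [PartialOrder P] (M N : Set (Set P))
    {I : Type u} (r : I → I → Prop) (f : I → P) (x : P) : Prop :=
  ∃ A S : Set P, A ∈ M ∧ S ∈ N ∧ IsLUB A x ∧ IsGLB S x ∧
    ∀ a ∈ A, ∀ s ∈ S, ∃ i₀, ∀ i, r i₀ i → a ≤ f i ∧ f i ≤ s

/-- The topology `τ_𝓜𝓝` induced by `𝓜𝓝`-convergence. -/
def mnTop {P : Type u} [PartialOrder P] (M N : Set (Set P)) : Set (Set P) :=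
  {U | ∀ (I : Type u) (r : I → I → Prop) (f : I → P) (x : P),
      IsDirNet r → MNConv M N r f x → x ∈ U → ∃ i₀, ∀ i, r i₀ i → f i ∈ U}

/-- The `𝓜𝓝`-convergence structure is topological. -/
def MNTopological {P : Type u} [PartialOrder P] (M N : Set (Set P)) : Prop :=
  ∀ (I : Type u) (r : I → I → Prop) (f : I → P) (x : P), IsDirNet r →
    (∀ U ∈ mnTop M N, x ∈ U → ∃ i₀, ∀ i, r i₀ i → f i ∈ U) →
    MNConv M N r f x

/-- The relation `x ≪_𝓜𝓝 y`. -/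
def wbMN {P : Type u} [PartialOrder P] (M N : Set (Set P)) (x y : P) : Prop :=
  ∀ A S : Set P, A ∈ M → S ∈ N → IsLUB A y → IsGLB S y →
    ∃ B T : Set P, B.Nonempty ∧ B.Finite ∧ B ⊆ A ∧ T.Nonempty ∧ T.Finite ∧ T ⊆ S ∧
      upperBounds B ∩ lowerBounds T ⊆ Set.Ici x

/-- The relation `y ◁_𝓜𝓝 z`. -/
def triMN {P : Type u} [PartialOrder P] (M N : Set (Set P)) (y z : P) : Prop :=
  ∀ A S : Set P, A ∈ M → S ∈ N → IsLUB A y → IsGLB S y →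
    ∃ B T : Set P, B.Nonempty ∧ B.Finite ∧ B ⊆ A ∧ T.Nonempty ∧ T.Finite ∧ T ⊆ S ∧
      upperBounds B ∩ lowerBounds T ⊆ Set.Iic z

/-- `𝓜𝓝`-continuity of the poset `P`. -/
def MNCont {P : Type u} [PartialOrder P] (M N : Set (Set P)) : Prop :=
  ∀ x y : P,
    (∃ A S : Set P, A ∈ M ∧ S ∈ N ∧ A ⊆ {w | wbMN M N w x} ∧
      S ⊆ {w | triMN M N x w} ∧ IsLUB A x ∧ IsGLB S x) ∧
    ({w | wbMN M N x w} ∩ {w | triMN M N w y}) ∈ mnTop M N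

/-! The sets open for `𝓜𝓝`-convergence form a topology. If convergence in it implies
`𝓜𝓝`-convergence, then the neighbourhood net of `z` yields `A ∈ 𝓜⁺`, `S ∈ 𝓝⁻` with
`z = sup A = inf S` such that every `↑a` (`a ∈ A`) and `↓s` (`s ∈ S`) is a neighbourhood of `z`;
this gives (MN1). Conversely, if `U` is a neighbourhood of `w` and `w = sup A = inf S`, the net
indexed by finite pieces `(B, T)` of `(A, S)` that picks a point of `ub B ∩ lb T` outside `U`
would `𝓜𝓝`-converge to `w`, so some `ub B ∩ lb T` lies in `U`. Hence `x ≪ w` and `w ◁ y` hold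
as soon as `↑x`, resp. `↓y`, is a neighbourhood of `w`, which makes the set in (MN2) open. -/

open Set Filter Topology

lemma isDirNet_of_directed {I : Type u} {α : Type*} [Preorder α] [Nonempty I] (g : I → α)
    (hg : Directed (· ≤ ·) g) : IsDirNet (fun i j => g i ≤ g j) :=
  ⟨fun _ => le_rfl, le_trans, ‹_›, hg⟩

lemma MinSel.nonempty_of_mem {P : Type u} [PartialOrder P] {M : Set (Set P)} (hM : MinSel M)
    {A : Set P} (hA : A ∈ M) : A.Nonempty :=
  nonempty_iff_ne_empty.2 fun h => hM.1 (h ▸ hA)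

lemma upperBounds_inter_lowerBounds_mem_nhds {X : Type*} [TopologicalSpace X] [Preorder X]
    {B T : Set X} {z : X} (hB : B.Finite) (hT : T.Finite) (hBz : ∀ b ∈ B, Ici b ∈ 𝓝 z)
    (hTz : ∀ t ∈ T, Iic t ∈ 𝓝 z) : upperBounds B ∩ lowerBounds T ∈ 𝓝 z :=
  (hB.eventually_all.2 hBz).and (hT.eventually_all.2 hTz)

section

variable {P : Type u} [PartialOrder P] {M N : Set (Set P)}

abbrev mnTopology (M N : Set (Set P)) : TopologicalSpace P where
  IsOpen U := U ∈ mnTop M N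
  isOpen_univ _ _ _ _ hdir _ _ :=
    let ⟨i⟩ := hdir.nonempty
    ⟨i, fun _ _ => trivial⟩
  isOpen_inter U V hU hV I r f x hdir hconv hx := by
    obtain ⟨i₁, h₁⟩ := hU I r f x hdir hconv hx.1
    obtain ⟨i₂, h₂⟩ := hV I r f x hdir hconv hx.2
    obtain ⟨k, hk₁, hk₂⟩ := hdir.directed i₁ i₂
    exact ⟨k, fun j hj => ⟨h₁ j (hdir.trans hk₁ hj), h₂ j (hdir.trans hk₂ hj)⟩⟩
  isOpen_sUnion 𝒰 h𝒰 I r f x hdir hconv := by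
    rintro ⟨U, hU, hxU⟩
    obtain ⟨i₀, hi₀⟩ := h𝒰 U hU I r f x hdir hconv hxU
    exact ⟨i₀, fun i hi => ⟨U, hU, hi₀ i hi⟩⟩

abbrev mnNhds (M N : Set (Set P)) (z : P) : Filter P :=
  @nhds P (mnTopology M N) z

lemma exists_Ici_Iic_mem_mnNhds (hM : MinSel M) (hN : MinSel N) (htop : MNTopological M N)
    (z : P) : ∃ A S : Set P, A ∈ M ∧ S ∈ N ∧ IsLUB A z ∧ IsGLB S z ∧
      (∀ a ∈ A, Ici a ∈ mnNhds M N z) ∧ ∀ s ∈ S, Iic s ∈ mnNhds M N z := by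
  let _ := mnTopology M N
  let I : Type u := {q : Set P × P // q.1 ∈ 𝓝 z ∧ q.2 ∈ q.1}
  have : Nonempty I := ⟨⟨(univ, z), univ_mem, trivial⟩⟩
  have hdir := isDirNet_of_directed (fun i : I => OrderDual.toDual i.1.1) fun i j =>
    ⟨⟨(i.1.1 ∩ j.1.1, z), inter_mem i.2.1 j.2.1, mem_of_mem_nhds i.2.1, mem_of_mem_nhds j.2.1⟩,
      inter_subset_left, inter_subset_right⟩
  obtain ⟨A, S, hA, hS, hlub, hglb, hev⟩ := htop I _ (fun i => i.1.2) z hdir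
    fun U hU hzU => ⟨⟨(U, z), IsOpen.mem_nhds hU hzU, hzU⟩, fun i hi => hi i.2.2⟩
  have hIcc : ∀ a ∈ A, ∀ s ∈ S, Icc a s ∈ 𝓝 z := fun a ha s hs => by
    obtain ⟨i₀, hi₀⟩ := hev a ha s hs
    exact mem_of_superset i₀.2.1 fun p hp => hi₀ ⟨(i₀.1.1, p), i₀.2.1, hp⟩ le_rfl
  obtain ⟨a₀, ha₀⟩ := hM.nonempty_of_mem hA
  obtain ⟨s₀, hs₀⟩ := hN.nonempty_of_mem hS
  exact ⟨A, S, hA, hS, hlub, hglb,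
    fun a ha => mem_of_superset (hIcc a ha s₀ hs₀) Icc_subset_Ici_self,
    fun s hs => mem_of_superset (hIcc a₀ ha₀ s hs) Icc_subset_Iic_self⟩

lemma exists_upperBounds_inter_lowerBounds_subset (hM : MinSel M) (hN : MinSel N)
    {A S U : Set P} {w : P} (hA : A ∈ M) (hS : S ∈ N) (hlub : IsLUB A w) (hglb : IsGLB S w)
    (hU : U ∈ mnNhds M N w) :
    ∃ B T : Set P, B.Nonempty ∧ B.Finite ∧ B ⊆ A ∧ T.Nonempty ∧ T.Finite ∧ T ⊆ S ∧
      upperBounds B ∩ lowerBounds T ⊆ U := by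
  let _ := mnTopology M N
  obtain ⟨V, hVU, hV, hwV⟩ := mem_nhds_iff.1 hU
  by_contra! hcon
  let J : Type u := {q : Set P × Set P //
    q.1.Nonempty ∧ q.1.Finite ∧ q.1 ⊆ A ∧ q.2.Nonempty ∧ q.2.Finite ∧ q.2 ⊆ S}
  let single (a : P) (ha : a ∈ A) (s : P) (hs : s ∈ S) : J :=
    ⟨({a}, {s}), singleton_nonempty a, finite_singleton a, singleton_subset_iff.2 ha,
      singleton_nonempty s, finite_singleton s, singleton_subset_iff.2 hs⟩
  have hJ : ∀ j : J, ∃ p ∈ upperBounds j.1.1 ∩ lowerBounds j.1.2, p ∉ U :=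
    fun ⟨(B, T), hB, hBf, hBA, hT, hTf, hTS⟩ => not_subset.1 (hcon B T hB hBf hBA hT hTf hTS)
  choose g hg hgU using hJ
  obtain ⟨a₀, ha₀⟩ := hM.nonempty_of_mem hA
  obtain ⟨s₀, hs₀⟩ := hN.nonempty_of_mem hS
  have : Nonempty J := ⟨single a₀ ha₀ s₀ hs₀⟩
  have hdir := isDirNet_of_directed (fun j : J => j.1)
    fun ⟨(B, T), hB, hBf, hBA, hT, hTf, hTS⟩ ⟨(B', T'), hB', hB'f, hB'A, hT', hT'f, hT'S⟩ =>
      ⟨⟨(B ∪ B', T ∪ T'), hB.mono subset_union_left, hBf.union hB'f, union_subset hBA hB'A,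
        hT.mono subset_union_left, hTf.union hT'f, union_subset hTS hT'S⟩,
        ⟨subset_union_left, subset_union_left⟩, ⟨subset_union_right, subset_union_right⟩⟩
  have hconv : MNConv M N (fun i j : J => i.1 ≤ j.1) g w :=
    ⟨A, S, hA, hS, hlub, hglb, fun a ha s hs => ⟨single a ha s hs, fun j hj =>
      ⟨(hg j).1 ((Prod.le_def.1 hj).1 rfl), (hg j).2 ((Prod.le_def.1 hj).2 rfl)⟩⟩⟩
  obtain ⟨j, hj⟩ := hV J _ g w hdir hconv hwV
  exact hgU j (hVU (hj j le_rfl))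

lemma wbMN_of_mem_mnNhds (hM : MinSel M) (hN : MinSel N) {U : Set P} {a w : P}
    (hU : U ∈ mnNhds M N w) (hUa : U ⊆ Ici a) : wbMN M N a w := by
  intro A S hA hS hlub hglb
  obtain ⟨B, T, hB, hBf, hBA, hT, hTf, hTS, hBT⟩ :=
    exists_upperBounds_inter_lowerBounds_subset hM hN hA hS hlub hglb hU
  exact ⟨B, T, hB, hBf, hBA, hT, hTf, hTS, hBT.trans hUa⟩

lemma triMN_of_mem_mnNhds (hM : MinSel M) (hN : MinSel N) {U : Set P} {s w : P}
    (hU : U ∈ mnNhds M N w) (hUs : U ⊆ Iic s) : triMN M N w s := by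
  intro A S hA hS hlub hglb
  obtain ⟨B, T, hB, hBf, hBA, hT, hTf, hTS, hBT⟩ :=
    exists_upperBounds_inter_lowerBounds_subset hM hN hA hS hlub hglb hU
  exact ⟨B, T, hB, hBf, hBA, hT, hTf, hTS, hBT.trans hUs⟩

end

/-- If the 𝓜𝓝-convergence structure is topological, then `P` is 𝓜𝓝-continuous. -/
theorem stmt_16 {P : Type u} [PartialOrder P] (M N : Set (Set P))
    (hM : MinSel M) (hN : MinSel N) (htop : MNTopological M N) : MNCont M N := by
  let _ := mnTopology M N
  intro x y
  obtain ⟨A, S, hA, hS, hlub, hglb, hIci, hIic⟩ := exists_Ici_Iic_mem_mnNhds hM hN htop x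
  refine ⟨⟨A, S, hA, hS, fun a ha => wbMN_of_mem_mnNhds hM hN (hIci a ha) subset_rfl,
    fun s hs => triMN_of_mem_mnNhds hM hN (hIic s hs) subset_rfl, hlub, hglb⟩, ?_⟩
  refine (isOpen_iff_mem_nhds (X := P)).2 ?_
  rintro z ⟨hxz, hzy⟩
  obtain ⟨A, S, hA, hS, hlub, hglb, hIci, hIic⟩ := exists_Ici_Iic_mem_mnNhds hM hN htop z
  obtain ⟨B, T, -, hB, hBA, -, hT, hTS, hBT⟩ := hxz A S hA hS hlub hglb
  obtain ⟨B', T', -, hB', hB'A, -, hT', hT'S, hBT'⟩ := hzy A S hA hS hlub hglb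
  have hV := upperBounds_inter_lowerBounds_mem_nhds hB hT
    (fun b hb => hIci b (hBA hb)) (fun t ht => hIic t (hTS ht))
  have hV' := upperBounds_inter_lowerBounds_mem_nhds hB' hT'
    (fun b hb => hIci b (hB'A hb)) (fun t ht => hIic t (hT'S ht))
  filter_upwards [eventually_mem_nhds_iff.2 hV, eventually_mem_nhds_iff.2 hV'] with w hw hw'
  exact ⟨wbMN_of_mem_mnNhds hM hN hw hBT, triMN_of_mem_mnNhds hM hN hw' hBT'⟩
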